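/- arXiv:2512.07711 — 2 statements merged into one kernel-verified Lean document; each statement's English description precedes it below -/
import Mathlib

section
/- The van der Waerden ideal W = ⋃_n E_n is a σ-porous subset of the Cantor space 2^ω. -/
open Classical Filter

/-- A set of naturals is thick if it contains arbitrarily long intervals. -/
def Thick (T : Set ℕ) : Prop := ∀ p : ℕ, ∃ n : ℕ, ∀ k ≤ p, n + k ∈ T

/-- A set of naturals is syndetic if it has gaps of bounded length. -/
def Syndetic (S : Set ℕ) : Prop := ∃ p : ℕ, ∀ a : ℕ, ∃ k ≤ p, a + k ∈ S

/-- Piecewise syndetic: intersection of a thick set and a syndetic set. -/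
def PiecewiseSyndetic (P : Set ℕ) : Prop :=
  ∃ T S : Set ℕ, Thick T ∧ Syndetic S ∧ P = T ∩ S

/-- `A` contains an arithmetic progression of length `n`. -/
def HasAPSet (A : Set ℕ) (n : ℕ) : Prop :=
  ∃ a r : ℕ, 0 < r ∧ ∀ i < n, a + i * r ∈ A

/-- The standard ultrametric on Cantor space `2^ω`:
`ρ(x,y) = 2^{-min{i : x i ≠ y i}}` for `x ≠ y`, and `0` otherwise. -/
noncomputable def rho (x y : ℕ → Bool) : ℝ :=
  if h : x = y then 0
  else (2 : ℝ) ^ (-(Nat.find (Function.ne_iff.mp h) : ℤ))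

/-- Open ball in Cantor space with respect to `rho`. -/
def ball (x : ℕ → Bool) (ε : ℝ) : Set (ℕ → Bool) := {y | rho y x < ε}

/-- Metric porosity in Cantor space. -/
def Porous (E : Set (ℕ → Bool)) : Prop :=
  ∃ α : ℝ, 0 < α ∧ α < 1 ∧ ∃ ε₀ : ℝ, 0 < ε₀ ∧
    ∀ ε : ℝ, 0 < ε → ε ≤ ε₀ → ∀ x : ℕ → Bool,
      ∃ y : ℕ → Bool, ball y (α * ε) ⊆ ball x ε \ E

/-- σ-porous: covered by countably many porous sets. -/
def SigmaPorous (E : Set (ℕ → Bool)) : Prop :=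
  ∃ F : ℕ → Set (ℕ → Bool), (∀ n, Porous (F n)) ∧ E ⊆ ⋃ n, F n

/-- The basic clopen cylinder `[s]` of all extensions of a finite string `s`. -/
def Cyl (s : List Bool) : Set (ℕ → Bool) := {x | ∀ i < s.length, x i = s.getD i false}

/-- A point of Cantor space, viewed as a subset of ω, is thick. -/
def ThickB (x : ℕ → Bool) : Prop := ∀ p : ℕ, ∃ n : ℕ, ∀ k ≤ p, x (n + k) = true

/-- `x`, viewed as a subset of ω, contains an arithmetic progression of length `n`. -/
def HasAP (x : ℕ → Bool) (n : ℕ) : Prop :=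
  ∃ a r : ℕ, 0 < r ∧ ∀ i < n, x (a + i * r) = true

/-- `E_n`: points of Cantor space with no arithmetic progression of length `n`. -/
def ESet (n : ℕ) : Set (ℕ → Bool) := {x | ¬ HasAP x n}

/-- The van der Waerden ideal, as a subset of Cantor space. -/
def vdW : Set (ℕ → Bool) := ⋃ n, ESet n

/-- Ideal on ω, with members represented as points of Cantor space. -/
def IsIdealB (I : Set (ℕ → Bool)) : Prop :=
  (fun _ => false) ∈ I ∧
  (∀ x y : ℕ → Bool, (∀ n, x n = true → y n = true) → y ∈ I → x ∈ I) ∧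
  (∀ x y : ℕ → Bool, x ∈ I → y ∈ I → (fun n => x n || y n) ∈ I)

/-- `n`-porosity: every cylinder has a depth-`n` subcylinder missing `A`. -/
def NPorous (n : ℕ) (A : Set (ℕ → Bool)) : Prop :=
  ∀ s : List Bool, ∃ t : List Bool, t.length = n ∧ Cyl (s ++ t) ∩ A = ∅

/-- The length-`n` initial segment of `x` as a finite string. -/
def initSeg (x : ℕ → Bool) (n : ℕ) : List Bool := (List.range n).map x

/-- `S_n(A)`: the maximal size of `A ∩ {m, …, m+n}` over all `m`. -/
noncomputable def Sn (A : Set ℕ) (n : ℕ) : ℕ :=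
  sSup {k : ℕ | ∃ m : ℕ, (A ∩ Set.Icc m (m + n)).ncard = k}

/-- `A = {n², n²+1 : n ≥ 1}`. -/
def ASet : Set ℕ := {k | ∃ n : ℕ, 1 ≤ n ∧ (k = n ^ 2 ∨ k = n ^ 2 + 1)}

/-- `P = {x ∈ 2^ω : x(k) = 0 for all k ∉ A}`. -/
def CantorP : Set (ℕ → Bool) := {x | ∀ k, k ∉ ASet → x k = false}

lemma rho_lt_two_zpow {z w : ℕ → Bool} {j : ℕ} (h : rho z w < (2:ℝ)^(-(j:ℤ))) :
    ∀ i ≤ j, z i = w i := by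
  intro i hi
  by_cases hzw : z = w
  · exact congrFun hzw i
  · rw [rho, dif_neg hzw] at h
    have hlt : (j:ℤ) < (Nat.find (Function.ne_iff.mp hzw) : ℤ) := by
      have := (zpow_lt_zpow_iff_right₀ (by norm_num : (1:ℝ) < 2)).mp h
      omega
    have : i < Nat.find (Function.ne_iff.mp hzw) := by
      have : (i:ℤ) ≤ (j:ℤ) := by exact_mod_cast hi
      omega
    have := Nat.find_min (Function.ne_iff.mp hzw) this
    simpa using this

lemma rho_le_of_agree {z w : ℕ → Bool} {m : ℕ} (h : ∀ i < m, z i = w i) :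
    rho z w ≤ (2:ℝ)^(-(m:ℤ)) := by
  by_cases hzw : z = w
  · rw [rho, dif_pos hzw]; positivity
  · rw [rho, dif_neg hzw]
    have hfind : m ≤ Nat.find (Function.ne_iff.mp hzw) := by
      rw [Nat.le_find_iff]
      intro i hi
      simpa using h i hi
    apply zpow_le_zpow_right₀ (by norm_num : (1:ℝ) ≤ 2)
    omega

lemma ESet_porous (n : ℕ) : Porous (ESet n) := by
  refine ⟨(2:ℝ)^(-(n+2:ℤ)), by positivity, ?_, 1/2, by norm_num, ?_⟩
  · apply zpow_lt_one_of_neg₀ (by norm_num : (1:ℝ) < 2)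
    omega
  intro ε hε hε2 x
  have hex : ∃ m : ℕ, (2:ℝ)^(-(m:ℤ)) < ε := by
    obtain ⟨k, hk⟩ := exists_pow_lt_of_lt_one hε (by norm_num : (1:ℝ)/2 < 1)
    refine ⟨k, ?_⟩
    calc (2:ℝ)^(-(k:ℤ)) = ((1:ℝ)/2)^k := by
          rw [zpow_neg, zpow_natCast, ← inv_pow]; norm_num
      _ < ε := hk
  set m := Nat.find hex with hmdef
  have hm : (2:ℝ)^(-(m:ℤ)) < ε := Nat.find_spec hex
  have hm1 : 1 ≤ m := by
    by_contra hc
    have hm0 : m = 0 := by omega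
    rw [hm0] at hm
    norm_num at hm
    linarith
  have hmin : ε ≤ (2:ℝ)^(-((m-1:ℕ):ℤ)) :=
    le_of_not_gt (Nat.find_min hex (by omega))
  set y : ℕ → Bool := fun i => if m ≤ i ∧ i < m + n then true else x i with hy
  refine ⟨y, ?_⟩
  intro z hz
  have hαε : (2:ℝ)^(-(n+2:ℤ)) * ε ≤ (2:ℝ)^(-((m+n:ℕ):ℤ)) := by
    calc (2:ℝ)^(-(n+2:ℤ)) * ε ≤ (2:ℝ)^(-(n+2:ℤ)) * (2:ℝ)^(-((m-1:ℕ):ℤ)) := by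
          apply mul_le_mul_of_nonneg_left hmin (by positivity)
      _ = (2:ℝ)^(-(n+2:ℤ) + -((m-1:ℕ):ℤ)) := (zpow_add₀ (by norm_num) _ _).symm
      _ ≤ (2:ℝ)^(-((m+n:ℕ):ℤ)) := by
          apply zpow_le_zpow_right₀ (by norm_num : (1:ℝ) ≤ 2)
          omega
  have hagree : ∀ i ≤ m + n, z i = y i :=
    rho_lt_two_zpow (lt_of_lt_of_le hz hαε)
  constructor
  · have hzx : ∀ i < m, z i = x i := by
      intro i hi
      have h1 := hagree i (by omega)
      have h2 : y i = x i := by simp [hy, Nat.not_le.mpr hi]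
      rw [h1, h2]
    exact lt_of_le_of_lt (rho_le_of_agree hzx) hm
  · intro hzE
    refine hzE ⟨m, 1, one_pos, fun i hi => ?_⟩
    have h1 := hagree (m + i * 1) (by omega)
    rw [h1]
    simp [hy]
    omega

/-- The van der Waerden ideal is σ-porous. -/
theorem vdW_sigmaPorous : SigmaPorous vdW :=
  ⟨ESet, ESet_porous, Set.Subset.rfl⟩
end

section
/- An ideal I on ω is σ-porous as a subset of Cantor space if and only if I ⊆ Thick⁺, i.e., if and only if no member of I contains arbitrarily long intervals. -/
open Classical Filter

/-!
For this metric, porosity of `E` is a uniform hole depth: some `C` such that every cylinder of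
length `n` contains a cylinder of length `n + C` missing `E`. Sets without `N + 1` consecutive
ones have depth `N + 1` (extend by a block of ones), so `Thick⁺`, and every ideal inside it, is
σ-porous. Conversely, if `x ∈ I` is thick and `I ⊆ ⋃ Fₙ` with each `Fₙ` porous, build `y ≤ x`
by successive extensions: pad with zeros up to a long block of ones of `x` and put the hole
avoiding `Fₙ` there. Then `y ∈ I`, as ideals are closed under subsets, yet `y` lies in no `Fₙ`.
-/

open PiNat

attribute [local instance] PiNat.dist

lemma rho_eq_dist (x y : ℕ → Bool) : rho x y = dist x y := by
  by_cases h : x = y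
  · simp [rho, h, PiNat.dist_self]
  · rw [dist_eq_of_ne h, firstDiff_def, dif_pos h, rho, dif_neg h, zpow_neg, zpow_natCast,
      one_div, inv_pow]
    congr

lemma cylinder_subset_ball {x : ℕ → Bool} {n : ℕ} {ε : ℝ} (h : (1 / 2 : ℝ) ^ n < ε) :
    cylinder x n ⊆ ball x ε := fun y hy => by
  change rho y x < ε
  rw [rho_eq_dist]
  exact (mem_cylinder_iff_dist_le.mp hy).trans_lt h

lemma ball_subset_cylinder {x : ℕ → Bool} {n : ℕ} {ε : ℝ} (h : ε ≤ (1 / 2 : ℝ) ^ n) :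
    ball x ε ⊆ cylinder x (n + 1) := fun y hy i hi => by
  change rho y x < ε at hy
  rw [rho_eq_dist] at hy
  exact apply_eq_of_dist_lt (hy.trans_le h) (Nat.lt_succ_iff.mp hi)

lemma self_mem_ball (x : ℕ → Bool) {ε : ℝ} (hε : 0 < ε) : x ∈ ball x ε := by
  simpa [ball, rho_eq_dist, PiNat.dist_self] using hε

lemma Porous.exists_disjoint_cylinder {E : Set (ℕ → Bool)} (hE : Porous E) :
    ∃ C, ∀ x n, ∃ w ∈ cylinder x n, Disjoint (cylinder w (n + C)) E := by
  obtain ⟨α, hα, -, ε₀, hε₀, hE⟩ := hE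
  obtain ⟨d, hd⟩ := exists_pow_lt_of_lt_one hα (by norm_num : (1 / 2 : ℝ) < 1)
  obtain ⟨M, hM⟩ := exists_pow_lt_of_lt_one hε₀ (by norm_num : (1 / 2 : ℝ) < 1)
  refine ⟨M + d, fun x n => ?_⟩
  have hε : (1 / 2 : ℝ) ^ (n + M) ≤ ε₀ :=
    (pow_le_pow_of_le_one (by norm_num) (by norm_num) (Nat.le_add_left M n)).trans hM.le
  obtain ⟨w, hw⟩ := hE _ (by positivity) hε x
  have hw_ball : ball w (α * (1 / 2) ^ (n + M)) ⊆ ball x ((1 / 2) ^ (n + M)) \ E := hw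
  refine ⟨w, ?_, Set.disjoint_left.mpr fun z hz => (hw_ball (cylinder_subset_ball ?_ hz)).2⟩
  · have hwx := (hw_ball (self_mem_ball w (by positivity))).1
    exact cylinder_anti x (by omega) (ball_subset_cylinder le_rfl hwx)
  · rw [← add_assoc, pow_add, mul_comm]
    exact mul_lt_mul_of_pos_right hd (by positivity)

lemma porous_of_exists_disjoint_cylinder {E : Set (ℕ → Bool)} {C : ℕ}
    (hC : ∀ x n, ∃ w ∈ cylinder x n, Disjoint (cylinder w (n + C)) E) : Porous E := by
  refine ⟨(1 / 2) ^ (C + 1), by positivity, pow_lt_one₀ (by norm_num) (by norm_num) (by omega),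
    1, one_pos, fun ε hε hε₁ x => ?_⟩
  obtain ⟨M, hεM, hεM'⟩ :=
    exists_nat_pow_near_of_lt_one hε hε₁ (by norm_num : (0 : ℝ) < 1 / 2) (by norm_num)
  obtain ⟨w, hwx, hwE⟩ := hC x (M + 1)
  have hsmall : (1 / 2) ^ (C + 1) * ε ≤ (1 / 2 : ℝ) ^ (M + 1 + C) := by
    rw [show M + 1 + C = (C + 1) + M by omega, pow_add (1 / 2 : ℝ) (C + 1) M]
    exact mul_le_mul_of_nonneg_left hεM' (by positivity)
  refine ⟨w, fun z hz => ?_⟩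
  have hzw : z ∈ cylinder w (M + 1 + C) :=
    cylinder_anti w (by omega) (ball_subset_cylinder hsmall hz)
  refine ⟨?_, Set.disjoint_left.mp hwE hzw⟩
  have hzx : z ∈ cylinder w (M + 1) := cylinder_anti w (by omega) hzw
  rw [mem_cylinder_iff_eq.mp hwx] at hzx
  exact cylinder_subset_ball hεM hzx

lemma SigmaPorous.mono {E E' : Set (ℕ → Bool)} (hE' : SigmaPorous E') (h : E ⊆ E') :
    SigmaPorous E :=
  let ⟨F, hF, hE'F⟩ := hE'
  ⟨F, hF, h.trans hE'F⟩

lemma porous_setOf_forall_exists_false (N : ℕ) :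
    Porous {y : ℕ → Bool | ∀ n, ∃ k ≤ N, y (n + k) = false} := by
  refine porous_of_exists_disjoint_cylinder (C := N + 1) fun x n => ?_
  refine ⟨fun i => if i < n then x i else true, fun i hi => if_pos hi, ?_⟩
  refine Set.disjoint_left.mpr fun z hz hzN => ?_
  obtain ⟨k, hk, hzk⟩ := hzN n
  have hzk' : z (n + k) = true := by simpa using hz (n + k) (by omega)
  exact Bool.true_eq_false.mp (hzk'.symm.trans hzk)

theorem sigmaPorous_setOf_not_thickB : SigmaPorous {x | ¬ ThickB x} := by
  refine ⟨fun N => {y | ∀ n, ∃ k ≤ N, y (n + k) = false}, porous_setOf_forall_exists_false,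
    fun x hx => Set.mem_iUnion.mpr ?_⟩
  simpa [ThickB] using hx

lemma exists_forall_mem_cylinder {E : ℕ → Type*} {z : ℕ → ∀ n, E n} {L : ℕ → ℕ}
    (hL : StrictMono L) (hz : ∀ n, z (n + 1) ∈ cylinder (z n) (L n)) :
    ∃ y, ∀ n, y ∈ cylinder (z n) (L n) := by
  have nested : ∀ n k, n ≤ k → z k ∈ cylinder (z n) (L n) := by
    intro n k hnk
    induction k, hnk using Nat.le_induction with
    | base => exact self_mem_cylinder _ _
    | succ k hnk ih => exact fun i hi => (hz k i (hi.trans_le (hL.monotone hnk))).trans (ih i hi)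
  refine ⟨fun i => z (i + 1) i, fun n i hi => ?_⟩
  calc z (i + 1) i = z (max n (i + 1)) i :=
        (nested (i + 1) _ (le_max_right _ _) i ((Nat.lt_succ_self i).trans_le (hL.id_le _))).symm
    _ = z n i := nested n _ (le_max_left _ _) i hi

theorem exists_le_notMem_iUnion_of_extend {x : ℕ → Bool} {F : ℕ → Set (ℕ → Bool)}
    (hext : ∀ n z L, (∀ i < L, z i ≤ x i) → ∃ z' L', L < L' ∧ (∀ i < L', z' i ≤ x i) ∧
      z' ∈ cylinder z L ∧ Disjoint (cylinder z' L') (F n)) :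
    ∃ y ≤ x, y ∉ ⋃ n, F n := by
  let S := {p : (ℕ → Bool) × ℕ // ∀ i < p.2, p.1 i ≤ x i}
  have hstep : ∀ n (p : S), ∃ q : S, p.1.2 < q.1.2 ∧ q.1.1 ∈ cylinder p.1.1 p.1.2 ∧
      Disjoint (cylinder q.1.1 q.1.2) (F n) := by
    rintro n ⟨⟨z, L⟩, hz⟩
    obtain ⟨z', L', hL, hz', hcyl, hdisj⟩ := hext n z L hz
    exact ⟨⟨(z', L'), hz'⟩, hL, hcyl, hdisj⟩
  choose next hnext using hstep
  let seq : ℕ → S := fun n => Nat.rec ⟨(x, 0), fun _ h => absurd h (Nat.not_lt_zero _)⟩ next n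
  have hL : StrictMono fun n => (seq n).1.2 :=
    strictMono_nat_of_lt_succ fun n => (hnext n (seq n)).1
  obtain ⟨y, hy⟩ := exists_forall_mem_cylinder hL fun n => (hnext n (seq n)).2.1
  refine ⟨y, fun i => ?_, fun hyF => ?_⟩
  · have hi : i < (seq (i + 1)).1.2 := (Nat.lt_succ_self i).trans_le (hL.id_le _)
    rw [hy (i + 1) i hi]
    exact (seq (i + 1)).2 i hi
  · obtain ⟨n, hn⟩ := Set.mem_iUnion.mp hyF
    exact Set.disjoint_left.mp (hnext n (seq n)).2.2 (hy (n + 1)) hn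

lemma ThickB.exists_extend {x : ℕ → Bool} (hx : ThickB x) {E : Set (ℕ → Bool)} {C : ℕ}
    (hE : ∀ z n, ∃ w ∈ cylinder z n, Disjoint (cylinder w (n + C)) E)
    {z : ℕ → Bool} {L : ℕ} (hz : ∀ i < L, z i ≤ x i) :
    ∃ z' L', L < L' ∧ (∀ i < L', z' i ≤ x i) ∧ z' ∈ cylinder z L ∧ Disjoint (cylinder z' L') E := by
  obtain ⟨m, hm⟩ := hx (L + C)
  -- Pad `z` with zeros on `[L, L + m)`; the hole of depth `C` found after `L + m` then lies in
  -- `[m, m + L + C]`, where `x` is all ones.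
  obtain ⟨w, hw, hwE⟩ := hE (fun i => if i < L then z i else false) (L + m)
  refine ⟨w, L + m + C + 1, by omega, fun i hi => ?_, fun i hi => by simp [hw i (by omega), hi],
    hwE.mono_left (cylinder_anti w (by omega))⟩
  by_cases hiLm : i < L + m
  · rw [hw i hiLm]
    dsimp only
    split_ifs with hiL
    · exact hz i hiL
    · exact Bool.false_le _
  · have hxi : x (m + (i - m)) = true := hm (i - m) (by omega)
    rw [Nat.add_sub_cancel' (by omega)] at hxi
    exact hxi ▸ Bool.le_true _

theorem ThickB.exists_le_notMem_iUnion {x : ℕ → Bool} (hx : ThickB x)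
    {F : ℕ → Set (ℕ → Bool)} (hF : ∀ n, Porous (F n)) : ∃ y ≤ x, y ∉ ⋃ n, F n := by
  choose C hC using fun n => (hF n).exists_disjoint_cylinder
  exact exists_le_notMem_iUnion_of_extend fun n _ _ hz => hx.exists_extend (hC n) hz

/-- An ideal is σ-porous iff it is contained in Thick⁺. -/
theorem ideal_sigmaPorous_iff_subset_thickPlus (I : Set (ℕ → Bool))
    (hI : IsIdealB I) :
    SigmaPorous I ↔ ∀ x ∈ I, ¬ ThickB x := by
  refine ⟨fun ⟨F, hF, hIF⟩ x hxI hx => ?_, sigmaPorous_setOf_not_thickB.mono⟩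
  obtain ⟨y, hyx, hyF⟩ := hx.exists_le_notMem_iUnion hF
  exact hyF (hIF (hI.2.1 y x (fun n => Bool.le_iff_imp.mp (hyx n)) hxI))
end
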